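/- arXiv:2402.12017 — 6 statements merged into one kernel-verified Lean document; each statement's English description precedes it below -/
import Mathlib

section
/- For every real number y with 0 ≤ y ≤ 1, the expression y + (1 - y) * exp(-y) is at least 4/5. -/
/-! The minimum of `y + (1 - y) * exp (-y)` on `[0, 1]` is about `0.8005`, so the bound is tight:
replace `exp (-y)` by its degree-four Taylor polynomial minus the remainder bound `y ^ 5 / 100`
from `Real.exp_bound`, and check the resulting polynomial inequality. -/

open Real

lemma quintic_le_exp_neg {y : ℝ} (h0 : 0 ≤ y) (h1 : y ≤ 1) :
    1 - y + y ^ 2 / 2 - y ^ 3 / 6 + y ^ 4 / 24 - y ^ 5 / 100 ≤ exp (-y) := by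
  have habs : |-y| = y := by rw [abs_neg, abs_of_nonneg h0]
  have hbound := exp_bound (x := -y) (habs.le.trans h1) (n := 5) (by norm_num)
  have htaylor : ∑ i ∈ Finset.range 5, (-y) ^ i / (i.factorial : ℝ)
      = 1 - y + y ^ 2 / 2 - y ^ 3 / 6 + y ^ 4 / 24 := by
    simp [Finset.sum_range_succ, Nat.factorial]
    ring
  rw [habs, htaylor] at hbound
  norm_num [Nat.factorial] at hbound
  linarith [(abs_le.mp hbound).1]

-- The squares are centred at the minimiser `y ≈ 0.443`, where the slack is only about `5e-4`.
lemma four_fifths_le_add_one_sub_mul_quintic {y : ℝ} (h0 : 0 ≤ y) (h1 : y ≤ 1) :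
    4 / 5 ≤ y + (1 - y) * (1 - y + y ^ 2 / 2 - y ^ 3 / 6 + y ^ 4 / 24 - y ^ 5 / 100) := by
  nlinarith [sq_nonneg (y - 443 / 1000), sq_nonneg (y * (y - 443 / 1000)),
    mul_nonneg h0 (sub_nonneg.2 h1), mul_nonneg (mul_nonneg h0 h0) (sub_nonneg.2 h1)]

theorem stmt_2 (y : ℝ) (h0 : 0 ≤ y) (h1 : y ≤ 1) :
    4 / 5 ≤ y + (1 - y) * Real.exp (-y) := by
  have hy : 0 ≤ 1 - y := sub_nonneg.2 h1
  calc 4 / 5 ≤ y + (1 - y) * (1 - y + y ^ 2 / 2 - y ^ 3 / 6 + y ^ 4 / 24 - y ^ 5 / 100) :=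
        four_fifths_le_add_one_sub_mul_quintic h0 h1
    _ ≤ y + (1 - y) * exp (-y) := by gcongr; exact quintic_le_exp_neg h0 h1
end

section
/- Fix positive weights w : [n] → ℝ₊ and an index i. The value of the linear program (P_i): maximize y_i subject to y_i ≤ y_j + ln(w(i)) − ln(w(j)) for all j ≠ i, ∑_j y_j ≤ 1, and y ≥ 0 (taking value 0 if infeasible), is nondecreasing in w(i) and nonincreasing in each w(j) for j ≠ i. -/
open Finset

/-- The feasible set of `(P i)` for weights `w`. -/
def Feasible {n : ℕ} (w : Fin n → ℝ) (i : Fin n) : Set (Fin n → ℝ) :=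
  {Y | (∀ j, 0 ≤ Y j) ∧ (∑ j, Y j ≤ 1) ∧
    ∀ j, j ≠ i → Y i ≤ Y j + Real.log (w i) - Real.log (w j)}

/-- The value of `(P i)` (`0` if infeasible; note the objective is nonnegative on
any feasible point, so adjoining `0` does not change the value of a feasible program). -/
noncomputable def lpValue {n : ℕ} (w : Fin n → ℝ) (i : Fin n) : ℝ :=
  sSup (insert 0 ((fun Y : Fin n → ℝ => Y i) '' Feasible w i))

/-- The value of `(P i)` is nondecreasing in `w i` and nonincreasing in every `w j`, `j ≠ i`. -/
theorem stmt_5 {n : ℕ} (w w2 : Fin n → ℝ) (i : Fin n)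
    (hw : ∀ j, 0 < w j) (hw2 : ∀ j, 0 < w2 j)
    (hi : w i ≤ w2 i) (hj : ∀ j, j ≠ i → w2 j ≤ w j) :
    lpValue w i ≤ lpValue w2 i := by
  apply csSup_le_csSup
  · refine ⟨1, ?_⟩
    rintro x (rfl | ⟨Y, ⟨hY0, hYs, _⟩, rfl⟩)
    · exact zero_le_one
    · calc Y i ≤ ∑ j, Y j := Finset.single_le_sum (fun j _ => hY0 j) (mem_univ i)
        _ ≤ 1 := hYs
  · exact Set.insert_nonempty _ _
  · rintro x (rfl | ⟨Y, ⟨hY0, hYs, hYc⟩, rfl⟩)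
    · exact Set.mem_insert _ _
    · refine Set.mem_insert_of_mem _ ⟨Y, ⟨hY0, hYs, fun j hji => ?_⟩, rfl⟩
      have := hYc j hji
      have h1 := Real.log_le_log (hw i) hi
      have h2 := Real.log_le_log (hw2 j) (hj j hji)
      linarith
end

section
/- Fix positive weights w : [n] → ℝ₊ and an index i. Consider the program (P'_i): maximize t + ln(w(i)) over real t and z₁,…,zₙ ≥ 0 subject to t + ln(w(j)) ≤ z_j for all j and ∑_j z_j ≤ 1; (P'_i) is always feasible. Then (P_i) (maximize y_i subject to y_i ≤ y_j + ln(w(i)) − ln(w(j)) for j ≠ i, ∑_j y_j ≤ 1, y ≥ 0) is feasible if and only if the optimal value of (P'_i) is nonnegative, in which case the two programs have the same optimal value. -/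
open Finset

/-- The feasible set of `(P i)` for weights `w`. -/
def FeasibleP {n : ℕ} (w : Fin n → ℝ) (i : Fin n) : Set (Fin n → ℝ) :=
  {Y | (∀ j, 0 ≤ Y j) ∧ (∑ j, Y j ≤ 1) ∧
    ∀ j, j ≠ i → Y i ≤ Y j + Real.log (w i) - Real.log (w j)}

/-- The set of objective values of `(P' i)`: `t + ln (w i)` over all `t` and
`z ≥ 0` with `t + ln (w j) ≤ z j` for every `j`, and `∑ j, z j ≤ 1`. -/
def ObjP' {n : ℕ} (w : Fin n → ℝ) (i : Fin n) : Set ℝ :=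
  {u | ∃ (t : ℝ) (z : Fin n → ℝ), u = t + Real.log (w i) ∧ (∀ j, 0 ≤ z j) ∧
    (∑ j, z j ≤ 1) ∧ ∀ j, t + Real.log (w j) ≤ z j}

lemma objP'_eq {n : ℕ} (w : Fin n → ℝ) (i : Fin n) :
    ObjP' w i = {u | ∑ j, max (u - Real.log (w i) + Real.log (w j)) 0 ≤ 1} := by
  ext u
  simp only [Set.mem_setOf_eq, ObjP']
  constructor
  · rintro ⟨t, z, rfl, hz0, hzs, hzt⟩
    calc ∑ j, max (t + Real.log (w i) - Real.log (w i) + Real.log (w j)) 0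
        ≤ ∑ j, z j :=
          Finset.sum_le_sum fun j _ => max_le (by have := hzt j; linarith) (hz0 j)
      _ ≤ 1 := hzs
  · intro hu
    exact ⟨u - Real.log (w i), fun j => max (u - Real.log (w i) + Real.log (w j)) 0,
      by ring, fun j => le_max_right _ _, hu, fun j => le_max_left _ _⟩

lemma objP'_bddAbove {n : ℕ} (w : Fin n → ℝ) (i : Fin n) : BddAbove (ObjP' w i) := by
  refine ⟨1, fun u hu => ?_⟩
  obtain ⟨t, z, rfl, hz0, hzs, hzt⟩ := hu
  have h1 : z i ≤ ∑ j, z j := Finset.single_le_sum (fun j _ => hz0 j) (mem_univ i)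
  have := hzt i
  linarith

lemma objP'_nonempty {n : ℕ} (w : Fin n → ℝ) (i : Fin n) : (ObjP' w i).Nonempty := by
  refine ⟨-(1 + ∑ j, |Real.log (w j)|) + Real.log (w i),
    -(1 + ∑ j, |Real.log (w j)|), 0, rfl, fun j => le_rfl, by simp, fun j => ?_⟩
  have h1 : |Real.log (w j)| ≤ ∑ k, |Real.log (w k)| :=
    Finset.single_le_sum (f := fun k => |Real.log (w k)|) (fun k _ => abs_nonneg _) (mem_univ j)
  have h2 : Real.log (w j) ≤ |Real.log (w j)| := le_abs_self _
  simp only [Pi.zero_apply]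
  linarith

lemma objP'_isClosed {n : ℕ} (w : Fin n → ℝ) (i : Fin n) : IsClosed (ObjP' w i) := by
  rw [objP'_eq]
  exact isClosed_le (by fun_prop) continuous_const

/-- A nonnegative element of `ObjP'` yields a feasible point of `P` with the same value. -/
lemma objP'_to_feasible {n : ℕ} (w : Fin n → ℝ) (i : Fin n) {u : ℝ}
    (hu : u ∈ ObjP' w i) (h0 : 0 ≤ u) :
    ∃ Y ∈ FeasibleP w i, Y i = u := by
  obtain ⟨t, z, rfl, hz0, hzs, hzt⟩ := hu
  refine ⟨fun j => max (t + Real.log (w j)) 0, ⟨fun j => le_max_right _ _, ?_, ?_⟩, ?_⟩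
  · calc ∑ j, max (t + Real.log (w j)) 0 ≤ ∑ j, z j :=
        Finset.sum_le_sum fun j _ => max_le (hzt j) (hz0 j)
      _ ≤ 1 := hzs
  · intro j _
    have h1 : t + Real.log (w j) ≤ max (t + Real.log (w j)) 0 := le_max_left _ _
    have h2 : max (t + Real.log (w i)) 0 = t + Real.log (w i) := max_eq_left h0
    show max (t + Real.log (w i)) 0 ≤ max (t + Real.log (w j)) 0 + Real.log (w i) - Real.log (w j)
    rw [h2]; linarith
  · exact max_eq_left h0

/-- Any feasible point of `P` yields an element of `ObjP'` with the same value. -/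
lemma feasible_to_objP' {n : ℕ} (w : Fin n → ℝ) (i : Fin n) {Y : Fin n → ℝ}
    (hY : Y ∈ FeasibleP w i) : Y i ∈ ObjP' w i := by
  obtain ⟨h0, hs, hc⟩ := hY
  refine ⟨Y i - Real.log (w i), Y, by ring, h0, hs, fun j => ?_⟩
  by_cases hj : j = i
  · subst hj; linarith
  · have := hc j hj; linarith

/-- `(P' i)` is always feasible; `(P i)` is feasible iff the optimal value of `(P' i)` is
nonnegative, in which case the two programs have the same optimal value. -/
theorem stmt_6 {n : ℕ} (w : Fin n → ℝ) (i : Fin n) (hw : ∀ j, 0 < w j) :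
    (ObjP' w i).Nonempty ∧
    ((FeasibleP w i).Nonempty ↔ 0 ≤ sSup (ObjP' w i)) ∧
    ((FeasibleP w i).Nonempty →
      sSup ((fun Y : Fin n → ℝ => Y i) '' FeasibleP w i) = sSup (ObjP' w i)) := by
  have hne := objP'_nonempty w i
  have hbdd := objP'_bddAbove w i
  have hmem : sSup (ObjP' w i) ∈ ObjP' w i :=
    (objP'_isClosed w i).csSup_mem hne hbdd
  have hiff : (FeasibleP w i).Nonempty ↔ 0 ≤ sSup (ObjP' w i) := by
    constructor
    · rintro ⟨Y, hY⟩
      exact le_trans (hY.1 i) (le_csSup hbdd (feasible_to_objP' w i hY))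
    · intro h0
      obtain ⟨Y, hY, _⟩ := objP'_to_feasible w i hmem h0
      exact ⟨Y, hY⟩
  refine ⟨hne, hiff, fun hfeas => ?_⟩
  have h0 : 0 ≤ sSup (ObjP' w i) := hiff.mp hfeas
  have hsub : ((fun Y : Fin n → ℝ => Y i) '' FeasibleP w i) ⊆ ObjP' w i := by
    rintro u ⟨Y, hY, rfl⟩
    exact feasible_to_objP' w i hY
  obtain ⟨Y, hY, hYi⟩ := objP'_to_feasible w i hmem h0
  have hVbdd : BddAbove ((fun Y : Fin n → ℝ => Y i) '' FeasibleP w i) :=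
    hbdd.mono hsub
  refine le_antisymm (csSup_le_csSup hbdd (hfeas.image _) hsub) ?_
  calc sSup (ObjP' w i) = Y i := hYi.symm
    _ ≤ sSup _ := le_csSup hVbdd ⟨Y, hY, rfl⟩
end

section
/- Let i* be a bidder with maximum value v_{i*}(s), and let y ∈ [0,1] be the share eaten by i* in the eating process with weights w where w(i*) = v_{i*}(s) and w(j) ≤ v_{i*}(s) for all j. Then every bidder who eats a positive amount in this process starts eating no later than time y − ln(v_{i*}(s)), and hence has weight at least v_{i*}(s) · e^{−y}. Consequently the total weighted share ∑_j w(j) · x_j, where x_j is j's share, is at least v_{i*}(s) · (y + (1−y)e^{−y}). -/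
/-!
A bidder who eats a positive amount started before the stopping time `t`, and
`t ≤ y - ln w(i⋆)`; exponentiating gives `w(j) ≥ w(i⋆)·e^{-y}`. In the weighted share,
`i⋆` contributes `w(i⋆)·y`, and the remaining share `1 - y` is eaten by bidders whose
weight is at least `w(i⋆)·e^{-y}`.
-/

open Finset Real

theorem neg_log_le_max_sub_log {t a b : ℝ} (ha : 0 < max (t + log a) 0) :
    -log a ≤ max (t + log b) 0 - log b := by
  have hstart : -log a < t := by
    rcases lt_max_iff.mp ha with h | h
    · linarith
    · exact absurd h (lt_irrefl 0)
  linarith [le_max_left (t + log b) 0]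

theorem mul_exp_neg_le_of_neg_log_le {a b y : ℝ} (ha : 0 < a) (hb : 0 < b)
    (h : -log a ≤ y - log b) : b * exp (-y) ≤ a :=
  calc b * exp (-y) = exp (log b - y) := by rw [exp_sub, exp_log hb, exp_neg, div_eq_mul_inv]
    _ ≤ exp (log a) := exp_le_exp.mpr (by linarith)
    _ = a := exp_log ha

theorem Finset.mul_add_mul_sum_sub_le_sum_mul {ι R : Type*} [CommRing R] [LinearOrder R]
    [IsOrderedRing R] {s : Finset ι} {w x : ι → R} {c : R} {i : ι} (hi : i ∈ s)
    (hx : ∀ j ∈ s, 0 ≤ x j) (hc : ∀ j ∈ s, 0 < x j → c ≤ w j) :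
    w i * x i + c * (∑ j ∈ s, x j - x i) ≤ ∑ j ∈ s, w j * x j := by
  classical
  have hterm : ∀ j ∈ s.erase i, c * x j ≤ w j * x j := fun j hj => by
    have hjs := mem_of_mem_erase hj
    rcases (hx j hjs).eq_or_lt with h | h
    · simp [← h]
    · exact mul_le_mul_of_nonneg_right (hc j hjs h) h.le
  rw [← add_sum_erase s x hi, ← add_sum_erase s _ hi, add_sub_cancel_left, mul_sum]
  exact add_le_add_right (sum_le_sum hterm) _

theorem stmt_8_general {n : ℕ} (w : Fin n → ℝ) (hw : ∀ j, 0 < w j)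
    (istar : Fin n)
    (t : ℝ) (ht : ∑ j : Fin n, max (t + Real.log (w j)) 0 = 1)
    (y : ℝ) (hy : y = max (t + Real.log (w istar)) 0) :
    (∀ j : Fin n, 0 < max (t + Real.log (w j)) 0 →
        -Real.log (w j) ≤ y - Real.log (w istar) ∧
        w istar * Real.exp (-y) ≤ w j) ∧
    w istar * (y + (1 - y) * Real.exp (-y)) ≤
      ∑ j : Fin n, w j * max (t + Real.log (w j)) 0 := by
  have hstart : ∀ j, 0 < max (t + log (w j)) 0 → -log (w j) ≤ y - log (w istar) :=
    fun j hj => hy ▸ neg_log_le_max_sub_log hj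
  have hweight : ∀ j, 0 < max (t + log (w j)) 0 → w istar * exp (-y) ≤ w j :=
    fun j hj => mul_exp_neg_le_of_neg_log_le (hw j) (hw istar) (hstart j hj)
  refine ⟨fun j hj => ⟨hstart j hj, hweight j hj⟩, ?_⟩
  have hsum := mul_add_mul_sum_sub_le_sum_mul (w := w) (mem_univ istar)
    (fun j _ => le_max_right (t + log (w j)) 0) (fun j _ => hweight j)
  rw [ht, ← hy] at hsum
  linarith

/-- In the eating process with positive weights `w`, where `i⋆` has maximum weight
`w i⋆ = v_{i⋆}(s)`, `t` is the stopping time (total consumption equals `1`), and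
`y = (t + ln (w i⋆))⁺` is the share eaten by `i⋆`: every bidder eating a positive
amount has weight at least `w i⋆ · e^{−y}`, and the total weighted share is at
least `w i⋆ · (y + (1 − y)·e^{−y})`. -/
theorem stmt_8 {n : ℕ} (w : Fin n → ℝ) (hw : ∀ j, 0 < w j)
    (istar : Fin n) (hmax : ∀ j, w j ≤ w istar)
    (t : ℝ) (ht : ∑ j : Fin n, max (t + Real.log (w j)) 0 = 1)
    (y : ℝ) (hy : y = max (t + Real.log (w istar)) 0) :
    (∀ j : Fin n, 0 < max (t + Real.log (w j)) 0 →
        -Real.log (w j) ≤ y - Real.log (w istar) ∧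
        w istar * Real.exp (-y) ≤ w j) ∧
    w istar * (y + (1 - y) * Real.exp (-y)) ≤
      ∑ j : Fin n, w j * max (t + Real.log (w j)) 0 :=
  stmt_8_general w hw istar t ht y hy
end

section
/- Let M = ([n], 𝓘) be a matroid and let i ∈ [n]. Let w, ŵ : [n] → ℝ₊ be weight functions with ŵ(i) ≥ w(i) and ŵ(j) ≤ w(j) for all j ≠ i. If i is selected by the greedy algorithm run with weights w (sorting elements by nonincreasing weight, breaking ties by a fixed order, e.g. lower index first, and adding an element whenever it preserves independence), then i is also selected by the greedy algorithm run with weights ŵ using the same tie-breaking rule. -/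
open Finset
open scoped Classical

variable {n : ℕ}

/-- The list of indices sorted in nonincreasing order of weight,
breaking ties in favor of lower indices. -/
noncomputable def sortedList (n : ℕ) (w : Fin n → ℝ) : List (Fin n) :=
  (List.finRange n).mergeSort (fun a b => decide (w b < w a ∨ (w a = w b ∧ a ≤ b)))

/-- Greedy: process the list in order, adding an element whenever independence is kept. -/
noncomputable def greedyAux (Indep : Finset (Fin n) → Prop) :
    List (Fin n) → Finset (Fin n) → Finset (Fin n)
  | [], I => I
  | a :: l, I => greedyAux Indep l (if Indep (insert a I) then insert a I else I)

/-- The greedy algorithm on a matroid with weights `w`. -/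
noncomputable def greedy (Indep : Finset (Fin n) → Prop) (w : Fin n → ℝ) : Finset (Fin n) :=
  greedyAux Indep (sortedList n w) ∅

/-- The matroid rank function. -/
noncomputable def rank (Indep : Finset (Fin n) → Prop) (S : Finset (Fin n)) : ℕ :=
  (S.powerset.filter Indep).sup Finset.card

/-!
Throughout the run, the current set is a basis of the elements already processed, so an element
is selected exactly when it lies outside the closure of the elements sorted before it. Raising the
weight of `i` and lowering all others can only shrink the set of elements sorted before `i`, and
closure is monotone.
-/

namespace Matroid

variable {α : Type*} {M : Matroid α} {I X : Set α} {e : α}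

lemma IsBasis'.insert_isBasis'_insert (hI : M.IsBasis' I X) (he : M.Indep (insert e I)) :
    M.IsBasis' (insert e I) (insert e X) := by
  rw [isBasis'_iff_isBasis_inter_ground] at hI ⊢
  rw [Set.insert_inter_of_mem (he.subset_ground (Set.mem_insert e I))]
  exact hI.insert_isBasis_insert he

lemma IsBasis'.isBasis'_insert_of_not_indep (hI : M.IsBasis' I X)
    (he : ¬ M.Indep (insert e I)) : M.IsBasis' I (insert e X) := by
  refine ⟨⟨hI.indep, hI.subset.trans (Set.subset_insert e X)⟩,
    fun J ⟨hJ, hJX⟩ hIJ => ?_⟩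
  have heJ : e ∉ J := fun heJ => he (hJ.subset (Set.insert_subset heJ hIJ))
  exact hI.2 ⟨hJ, fun x hx => (Set.mem_insert_iff.1 (hJX hx)).resolve_left
    (fun hxe => heJ (hxe ▸ hx))⟩ hIJ

end Matroid

section Greedy

variable {Indep : Finset (Fin n) → Prop}

lemma greedyAux_append (l₁ l₂ : List (Fin n)) (I : Finset (Fin n)) :
    greedyAux Indep (l₁ ++ l₂) I = greedyAux Indep l₂ (greedyAux Indep l₁ I) := by
  induction l₁ generalizing I with
  | nil => rfl
  | cons a l₁ ih => exact ih _

lemma mem_greedyAux_iff_of_notMem {a : Fin n} {l : List (Fin n)} (ha : a ∉ l)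
    (I : Finset (Fin n)) : a ∈ greedyAux Indep l I ↔ a ∈ I := by
  induction l generalizing I with
  | nil => rfl
  | cons b l ih =>
    obtain ⟨hab, hal⟩ := not_or.1 (List.mem_cons.not.1 ha)
    rw [greedyAux, ih hal]
    split_ifs <;> simp [hab]

variable {M : Matroid (Fin n)}

lemma isBasis'_greedyAux (hM : ∀ I : Finset (Fin n), M.Indep I ↔ Indep I) (l : List (Fin n))
    {I : Finset (Fin n)} {X : Set (Fin n)} (hI : M.IsBasis' I X) :
    M.IsBasis' (greedyAux Indep l I) (X ∪ {x | x ∈ l}) := by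
  induction l generalizing I X with
  | nil => simpa [greedyAux] using hI
  | cons a l ih =>
    have hX : X ∪ {x | x ∈ a :: l} = insert a X ∪ {x | x ∈ l} := by
      ext x; simp only [List.mem_cons, Set.mem_union, Set.mem_insert_iff, Set.mem_ofPred_eq]; tauto
    rw [greedyAux, hX]
    apply ih
    split_ifs with ha
    · exact_mod_cast hI.insert_isBasis'_insert (by exact_mod_cast (hM _).2 ha)
    · exact hI.isBasis'_insert_of_not_indep (by exact_mod_cast mt (hM _).1 ha)

lemma mem_greedyAux_append_cons_iff (hM : ∀ I : Finset (Fin n), M.Indep I ↔ Indep I)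
    {a : Fin n} {l₁ l₂ : List (Fin n)} (ha₁ : a ∉ l₁) (ha₂ : a ∉ l₂) :
    a ∈ greedyAux Indep (l₁ ++ a :: l₂) ∅ ↔ a ∈ M.E \ M.closure {x | x ∈ l₁} := by
  have hJ : M.IsBasis' (greedyAux Indep l₁ ∅) {x | x ∈ l₁} := by
    simpa using isBasis'_greedyAux hM l₁ (I := ∅) (X := ∅)
      (by simpa using M.empty_indep.isBasis_self.isBasis')
  rw [greedyAux_append, greedyAux, mem_greedyAux_iff_of_notMem ha₂]
  generalize greedyAux Indep l₁ ∅ = J at hJ ⊢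
  have haJ : a ∉ (J : Set (Fin n)) := fun h => ha₁ (hJ.subset h)
  rw [← hJ.closure_eq_closure, ← hJ.indep.insert_indep_iff_of_notMem haJ, ← Finset.coe_insert,
    hM]
  split_ifs with h
  · simp [h]
  · simpa [h] using haJ

end Greedy

lemma List.Pairwise.mem_left_iff_lt {α β : Type*} [Preorder β] {f : α → β}
    {l₁ l₂ : List α} {a x : α} (h : (l₁ ++ a :: l₂).Pairwise (fun x y => f x < f y))
    (hx : x ∈ l₁ ++ a :: l₂) :
    x ∈ l₁ ↔ f x < f a := by
  obtain ⟨-, ha, hcross⟩ := List.pairwise_append.1 h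
  refine ⟨fun hx₁ => hcross x hx₁ a List.mem_cons_self, fun hxa => ?_⟩
  rcases List.mem_append.1 hx with hx₁ | hx
  · exact hx₁
  rcases List.mem_cons.1 hx with rfl | hx₂
  · exact absurd hxa (lt_irrefl _)
  · exact absurd hxa ((List.pairwise_cons.1 ha).1 x hx₂).asymm

section Sorting

/-- `sortedList n w` lists the indices in increasing order of this key. -/
def sortKey (w : Fin n → ℝ) (a : Fin n) : Lex (ℝᵒᵈ × Fin n) :=
  toLex (OrderDual.toDual (w a), a)

lemma sortKey_injective (w : Fin n → ℝ) : Function.Injective (sortKey w) :=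
  fun _ _ h => congrArg Prod.snd (toLex.injective h)

lemma mem_sortedList (w : Fin n → ℝ) (a : Fin n) : a ∈ sortedList n w :=
  (List.mergeSort_perm _ _).mem_iff.2 (List.mem_finRange a)

lemma sortedList_pairwise (w : Fin n → ℝ) :
    (sortedList n w).Pairwise (fun a b => sortKey w a < sortKey w b) := by
  have hrel : (fun a b : Fin n => decide (w b < w a ∨ (w a = w b ∧ a ≤ b))) =
      fun a b => decide (sortKey w a ≤ sortKey w b) := by
    funext a b
    simp [sortKey, Prod.Lex.toLex_le_toLex]
  have hle : (sortedList n w).Pairwise (fun a b => sortKey w a ≤ sortKey w b) := by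
    rw [sortedList, hrel]
    simpa using List.pairwise_mergeSort (le := fun a b => decide (sortKey w a ≤ sortKey w b))
      (fun _ _ _ hab hbc =>
        decide_eq_true ((of_decide_eq_true hab).trans (of_decide_eq_true hbc)))
      (fun a b => by simpa using le_total (sortKey w a) (sortKey w b)) (List.finRange n)
  have hnodup : (sortedList n w).Nodup :=
    (List.mergeSort_perm _ _).nodup_iff.2 (List.nodup_finRange n)
  exact (hle.and hnodup).imp fun ⟨hab, hne⟩ => lt_of_le_of_ne hab ((sortKey_injective w).ne hne)

lemma sortKey_lt_of_sortKey_lt {w w₂ : Fin n → ℝ} {i j : Fin n} (hi : w i ≤ w₂ i)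
    (hj : ∀ j, j ≠ i → w₂ j ≤ w j) (h : sortKey w₂ j < sortKey w₂ i) :
    sortKey w j < sortKey w i := by
  have hji : j ≠ i := fun hji => lt_irrefl _ (hji ▸ h)
  have hj' := hj j hji
  simp only [sortKey, Prod.Lex.toLex_lt_toLex, OrderDual.toDual_lt_toDual,
    OrderDual.toDual_inj] at h ⊢
  rcases h with h | ⟨h, hlt⟩
  · exact Or.inl (by linarith)
  · rcases (show w i ≤ w j by linarith).lt_or_eq with h' | h'
    · exact Or.inl h'
    · exact Or.inr ⟨h'.symm, hlt⟩

end Sorting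

lemma mem_greedy_iff {Indep : Finset (Fin n) → Prop} {M : Matroid (Fin n)}
    (hM : ∀ I : Finset (Fin n), M.Indep I ↔ Indep I) (w : Fin n → ℝ) (i : Fin n) :
    i ∈ greedy Indep w ↔ i ∈ M.E \ M.closure {j | sortKey w j < sortKey w i} := by
  obtain ⟨l₁, l₂, hl⟩ := List.append_of_mem (mem_sortedList w i)
  have hsorted := sortedList_pairwise w
  rw [hl] at hsorted
  have hmem : ∀ j, j ∈ l₁ ↔ sortKey w j < sortKey w i := fun j =>
    hsorted.mem_left_iff_lt (hl ▸ mem_sortedList w j)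
  have hi₁ : i ∉ l₁ := fun h => lt_irrefl _ ((hmem i).1 h)
  have hi₂ : i ∉ l₂ := fun h =>
    lt_irrefl _ ((List.pairwise_cons.1 (List.pairwise_append.1 hsorted).2.1).1 i h)
  rw [greedy, hl, mem_greedyAux_append_cons_iff hM hi₁ hi₂]
  simp only [hmem]

theorem stmt_9_general {n : ℕ} (Indep : Finset (Fin n) → Prop)
    (hEmpty : Indep ∅)
    (hDown : ∀ A B : Finset (Fin n), A ⊆ B → Indep B → Indep A)
    (hExch : ∀ A B : Finset (Fin n), Indep A → Indep B → A.card < B.card →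
      ∃ x ∈ B, x ∉ A ∧ Indep (insert x A))
    (i : Fin n) (w w2 : Fin n → ℝ)
    (hi : w i ≤ w2 i) (hj : ∀ j, j ≠ i → w2 j ≤ w j)
    (hsel : i ∈ greedy Indep w) :
    i ∈ greedy Indep w2 := by
  let M := (IndepMatroid.ofFinset Set.univ Indep hEmpty (fun I J hJ hIJ => hDown I J hIJ hJ)
    hExch (fun _ _ => Set.subset_univ _)).matroid
  have hM : ∀ I : Finset (Fin n), M.Indep I ↔ Indep I := fun I => by simp [M]
  rw [mem_greedy_iff hM] at hsel ⊢
  exact Set.sdiff_subset_sdiff_right (M.closure_mono fun j => sortKey_lt_of_sortKey_lt hi hj) hsel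

/-- Monotone selection: raising element `i`'s weight and lowering all other weights
preserves `i`'s selection by the matroid greedy algorithm (same tie-breaking rule). -/
theorem stmt_9 {n : ℕ} (Indep : Finset (Fin n) → Prop)
    (hEmpty : Indep ∅)
    (hDown : ∀ A B : Finset (Fin n), A ⊆ B → Indep B → Indep A)
    (hExch : ∀ A B : Finset (Fin n), Indep A → Indep B → A.card < B.card →
      ∃ x ∈ B, x ∉ A ∧ Indep (insert x A))
    (i : Fin n) (w w2 : Fin n → ℝ)
    (hw : ∀ j, 0 < w j) (hw2 : ∀ j, 0 < w2 j)
    (hi : w i ≤ w2 i) (hj : ∀ j, j ≠ i → w2 j ≤ w j)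
    (hsel : i ∈ greedy Indep w) :
    i ∈ greedy Indep w2 :=
  stmt_9_general Indep hEmpty hDown hExch i w w2 hi hj hsel
end

section
/- Let M = ([n], 𝓘) be a matroid. A partition of [n] into t pairwise disjoint independent sets I₁, …, I_t ∈ 𝓘 exists if and only if for every subset S ⊆ [n], |S| ≤ t · rank(S). -/
open Finset
open scoped Classical

variable {n : ℕ}

/-!
Say that a family `K` of independent sets satisfies the partition condition on a set `E`
disjoint from it if `|S| + ∑ᵢ |Kᵢ| ≤ ∑ᵢ r(S ∪ Kᵢ)` for all `S ⊆ E`; for `K = ∅` this is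
`|S| ≤ t · r(S)`, and `S` is tight when equality holds. The elements of `E` are added to the
family one at a time. By submodularity of the rank, tight sets are closed under union, so the
tight subsets of `E - e` have a largest member `D`. The condition at `D + e` forces
`r(D + e ∪ Kᵢ) > r(D ∪ Kᵢ)` for some `i`. Then `e` is spanned neither by `Kᵢ` nor by any
`S ∪ Kᵢ` with `S` tight, so `Kᵢ + e` is independent and the condition survives on `E - e`:
the right-hand side grows by one for a tight `S`, and a non-tight `S` had a unit of slack.
-/

section Rank

variable {Indep : Finset (Fin n) → Prop}

lemma card_le_rank {A S : Finset (Fin n)} (hA : Indep A) (hAS : A ⊆ S) :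
    A.card ≤ rank Indep S :=
  le_sup (mem_filter.2 ⟨mem_powerset.2 hAS, hA⟩)

variable (Indep) in
lemma rank_mono {S T : Finset (Fin n)} (h : S ⊆ T) : rank Indep S ≤ rank Indep T :=
  Finset.sup_le fun A hA => by
    rw [mem_filter, mem_powerset] at hA
    exact card_le_rank hA.2 (hA.1.trans h)

variable (Indep) in
lemma rank_le_card' (S : Finset (Fin n)) : rank Indep S ≤ S.card :=
  Finset.sup_le fun _ hA => card_le_card (mem_powerset.1 (mem_filter.1 hA).1)

lemma rank_eq_card_of_indep {K : Finset (Fin n)} (hK : Indep K) : rank Indep K = K.card :=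
  (rank_le_card' Indep K).antisymm (card_le_rank hK subset_rfl)

variable (hEmpty : Indep ∅) (hDown : ∀ A B : Finset (Fin n), A ⊆ B → Indep B → Indep A)
  (hExch : ∀ A B : Finset (Fin n), Indep A → Indep B → A.card < B.card →
    ∃ x ∈ B, x ∉ A ∧ Indep (insert x A))

include hEmpty in
lemma exists_indep_card_eq_rank (S : Finset (Fin n)) :
    ∃ B ⊆ S, Indep B ∧ B.card = rank Indep S := by
  obtain ⟨B, hB, hBcard⟩ :=
    exists_mem_eq_sup (S.powerset.filter Indep) ⟨∅, by simp [hEmpty]⟩ card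
  rw [mem_filter, mem_powerset] at hB
  exact ⟨B, hB.1, hB.2, hBcard.symm⟩

include hEmpty in
lemma indep_of_rank_eq_card {S : Finset (Fin n)} (h : rank Indep S = S.card) : Indep S := by
  obtain ⟨B, hBS, hB, hBcard⟩ := exists_indep_card_eq_rank hEmpty S
  rwa [eq_of_subset_of_card_le hBS (by omega)] at hB

include hEmpty hExch in
lemma exists_indep_superset_card_eq_rank {I S : Finset (Fin n)} (hI : Indep I) (hIS : I ⊆ S) :
    ∃ J, I ⊆ J ∧ J ⊆ S ∧ Indep J ∧ J.card = rank Indep S := by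
  let 𝒥 := S.powerset.filter fun J => I ⊆ J ∧ Indep J
  obtain ⟨J, hJ, hJmax⟩ := exists_max_image 𝒥 card ⟨I, by simp [𝒥, hIS, hI]⟩
  simp only [𝒥, mem_filter, mem_powerset] at hJ
  obtain ⟨hJS, hIJ, hJind⟩ := hJ
  refine ⟨J, hIJ, hJS, hJind, (card_le_rank hJind hJS).antisymm (not_lt.1 fun hlt => ?_)⟩
  obtain ⟨B, hBS, hB, hBcard⟩ := exists_indep_card_eq_rank hEmpty S
  obtain ⟨x, hxB, hxJ, hxJind⟩ := hExch J B hJind hB (hBcard ▸ hlt)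
  have := hJmax (insert x J) (by
    simp [𝒥, insert_subset (hBS hxB) hJS, hIJ.trans (subset_insert x J), hxJind])
  rw [card_insert_of_notMem hxJ] at this
  omega

include hEmpty hDown hExch in
lemma rank_union_add_rank_inter_le (A B : Finset (Fin n)) :
    rank Indep (A ∪ B) + rank Indep (A ∩ B) ≤ rank Indep A + rank Indep B := by
  obtain ⟨I, hIAB, hI, hIcard⟩ := exists_indep_card_eq_rank hEmpty (A ∩ B)
  obtain ⟨J, hIJ, hJAB, hJ, hJcard⟩ :=
    exists_indep_superset_card_eq_rank hEmpty hExch hI (hIAB.trans inter_subset_union)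
  have hJA : (J ∩ A).card ≤ rank Indep A :=
    card_le_rank (hDown _ _ inter_subset_left hJ) inter_subset_right
  have hJB : (J ∩ B).card ≤ rank Indep B :=
    card_le_rank (hDown _ _ inter_subset_left hJ) inter_subset_right
  have hI_le : I.card ≤ (J ∩ A ∩ (J ∩ B)).card :=
    card_le_card fun x hx => by simp_all [hIJ hx, mem_inter.1 (hIAB hx)]
  have hunion : J ∩ A ∪ J ∩ B = J := by
    rw [← inter_union_distrib_left, inter_eq_left.2 hJAB]
  have := card_union_add_card_inter (J ∩ A) (J ∩ B)
  rw [hunion] at this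
  omega

include hEmpty hDown in
lemma rank_insert_le (e : Fin n) (S : Finset (Fin n)) :
    rank Indep (insert e S) ≤ rank Indep S + 1 := by
  obtain ⟨B, hBS, hB, hBcard⟩ := exists_indep_card_eq_rank hEmpty (insert e S)
  have := card_le_rank (hDown _ _ (erase_subset e B) hB) (subset_insert_iff.1 hBS)
  have := pred_card_le_card_erase (s := B) (a := e)
  omega

include hEmpty hDown hExch in
/-- `rank (insert e S) = rank S + 1` says that `S` does not span `e`; spanning passes to
supersets. -/
lemma rank_insert_of_subset {e : Fin n} {S T : Finset (Fin n)} (hST : S ⊆ T)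
    (h : rank Indep (insert e T) = rank Indep T + 1) :
    rank Indep (insert e S) = rank Indep S + 1 := by
  have hsub := rank_union_add_rank_inter_le hEmpty hDown hExch (insert e S) T
  rw [insert_union, union_eq_right.2 hST, h] at hsub
  have := rank_mono Indep (subset_inter (subset_insert e S) hST)
  have := rank_insert_le hEmpty hDown e S
  omega

include hDown in
lemma card_le_card_mul_rank {ι : Type*} [Fintype ι] {P : ι → Finset (Fin n)}
    (hP : ∀ i, Indep (P i)) {S : Finset (Fin n)} (hS : S ⊆ univ.biUnion P) :
    S.card ≤ Fintype.card ι * rank Indep S :=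
  calc S.card ≤ ∑ i, (S ∩ P i).card := by
        conv_lhs => rw [← inter_eq_left.2 hS, inter_biUnion]
        exact card_biUnion_le
    _ ≤ ∑ _i : ι, rank Indep S :=
        sum_le_sum fun i _ => card_le_rank (hDown _ _ inter_subset_right (hP i)) inter_subset_left
    _ = Fintype.card ι * rank Indep S := by simp

end Rank

section UpdateInsert

open Function

variable {α ι : Type*} [DecidableEq ι] {K : ι → Finset α} {i : ι}

lemma sum_comp_update_add {M : Type*} [AddCommMonoid M] [Fintype ι] (f : Finset α → M)
    (A : Finset α) : ∑ j, f (update K i A j) + f (K i) = ∑ j, f (K j) + f A := by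
  rw [← comp_apply (f := f), ← comp_def, comp_update, sum_update_of_mem (mem_univ i),
    ← add_sum_erase univ _ (mem_univ i), sdiff_singleton_eq_erase]
  simp only [comp_apply]
  abel

variable [DecidableEq α] {e : α}

lemma pairwise_disjoint_update_insert (hK : Pairwise (Disjoint on K)) (he : ∀ j, e ∉ K j) :
    Pairwise (Disjoint on update K i (insert e (K i))) := by
  intro j l hjl
  simp only [onFun] at hK ⊢
  rcases eq_or_ne j i with rfl | hj
  · simpa [hjl.symm, he l] using hK hjl
  rcases eq_or_ne l i with rfl | hl
  · simpa [hj, he j] using hK hjl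
  · simpa [hj, hl] using hK hjl

lemma biUnion_update_insert [Fintype ι] :
    univ.biUnion (update K i (insert e (K i))) = insert e (univ.biUnion K) := by
  ext x
  simp only [mem_biUnion, mem_univ, true_and, mem_insert]
  constructor
  · rintro ⟨j, hj⟩
    rcases eq_or_ne j i with rfl | hji
    · rw [update_self, mem_insert] at hj
      exact hj.imp_right fun h => ⟨j, h⟩
    · exact .inr ⟨j, by simpa [hji] using hj⟩
  · rintro (rfl | ⟨j, hj⟩)
    · exact ⟨i, by simp⟩
    · rcases eq_or_ne j i with rfl | hji
      · exact ⟨j, by simp [hj]⟩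
      · exact ⟨j, by simpa [hji] using hj⟩

end UpdateInsert

section Partition

open Function

variable {Indep : Finset (Fin n) → Prop} {ι : Type*} [Fintype ι]

variable (Indep) in
noncomputable def unionRankSum (K : ι → Finset (Fin n)) (S : Finset (Fin n)) : ℕ :=
  ∑ i, rank Indep (S ∪ K i)

variable (Indep) in
def PartitionCondition (K : ι → Finset (Fin n)) (E : Finset (Fin n)) : Prop :=
  ∀ S ⊆ E, S.card + ∑ i, (K i).card ≤ unionRankSum Indep K S

variable (Indep) in
def IsTight (K : ι → Finset (Fin n)) (S : Finset (Fin n)) : Prop :=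
  unionRankSum Indep K S ≤ S.card + ∑ i, (K i).card

lemma PartitionCondition.mono {K : ι → Finset (Fin n)} {E F : Finset (Fin n)}
    (hE : PartitionCondition Indep K E) (hFE : F ⊆ E) : PartitionCondition Indep K F :=
  fun S hS => hE S (hS.trans hFE)

lemma isTight_empty {K : ι → Finset (Fin n)} (hK : ∀ i, Indep (K i)) : IsTight Indep K ∅ := by
  simp [IsTight, unionRankSum, rank_eq_card_of_indep (hK _)]

variable (hEmpty : Indep ∅) (hDown : ∀ A B : Finset (Fin n), A ⊆ B → Indep B → Indep A)
  (hExch : ∀ A B : Finset (Fin n), Indep A → Indep B → A.card < B.card →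
    ∃ x ∈ B, x ∉ A ∧ Indep (insert x A))

include hEmpty hDown hExch in
lemma unionRankSum_union_add_inter_le (K : ι → Finset (Fin n)) (S T : Finset (Fin n)) :
    unionRankSum Indep K (S ∪ T) + unionRankSum Indep K (S ∩ T) ≤
      unionRankSum Indep K S + unionRankSum Indep K T := by
  simp only [unionRankSum, ← sum_add_distrib]
  refine sum_le_sum fun i _ => ?_
  have := rank_union_add_rank_inter_le hEmpty hDown hExch (S ∪ K i) (T ∪ K i)
  rwa [← union_union_distrib_right, ← inter_union_distrib_right] at this

include hEmpty hDown hExch in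
lemma IsTight.union {K : ι → Finset (Fin n)} {E S T : Finset (Fin n)}
    (hE : PartitionCondition Indep K E) (hSE : S ⊆ E) (hS : IsTight Indep K S)
    (hT : IsTight Indep K T) : IsTight Indep K (S ∪ T) := by
  have := unionRankSum_union_add_inter_le hEmpty hDown hExch K S T
  have := hE (S ∩ T) (inter_subset_left.trans hSE)
  have := card_union_add_card_inter S T
  unfold IsTight at *
  omega

include hEmpty hDown hExch in
lemma PartitionCondition.exists_isTight_forall_subset {K : ι → Finset (Fin n)}
    {E : Finset (Fin n)} (hE : PartitionCondition Indep K E) (hK : ∀ i, Indep (K i)) :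
    ∃ D ⊆ E, IsTight Indep K D ∧ ∀ S ⊆ E, IsTight Indep K S → S ⊆ D := by
  obtain ⟨D, hD, hDmax⟩ := exists_max_image (E.powerset.filter (IsTight Indep K)) card
    ⟨∅, mem_filter.2 ⟨empty_mem_powerset E, isTight_empty hK⟩⟩
  rw [mem_filter, mem_powerset] at hD
  refine ⟨D, hD.1, hD.2, fun S hSE hS => ?_⟩
  have hSD := hDmax (S ∪ D) (mem_filter.2
    ⟨mem_powerset.2 (union_subset hSE hD.1), hS.union hEmpty hDown hExch hE hSE hD.2⟩)
  exact union_eq_right.1 (eq_of_subset_of_card_le subset_union_right hSD).symm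

include hEmpty hDown hExch in
lemma PartitionCondition.exists_indep_insert {K : ι → Finset (Fin n)} {E : Finset (Fin n)}
    (hE : PartitionCondition Indep K E) (hK : ∀ i, Indep (K i)) {e : Fin n} (he : e ∈ E)
    (heK : ∀ i, e ∉ K i) :
    ∃ i, Indep (insert e (K i)) ∧
      PartitionCondition Indep (update K i (insert e (K i))) (E.erase e) := by
  obtain ⟨D, hDE, hD, hDmax⟩ :=
    (hE.mono (erase_subset e E)).exists_isTight_forall_subset hEmpty hDown hExch hK
  have heD : e ∉ D := fun h => notMem_erase e E (hDE h)
  have hlt : unionRankSum Indep K D < unionRankSum Indep K (insert e D) := by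
    have := hE (insert e D) (insert_subset he (hDE.trans (erase_subset e E)))
    rw [card_insert_of_notMem heD] at this
    unfold IsTight at hD
    omega
  obtain ⟨i, -, hi⟩ := exists_lt_of_sum_lt hlt
  rw [insert_union] at hi
  have hDi : rank Indep (insert e (D ∪ K i)) = rank Indep (D ∪ K i) + 1 := by
    have := rank_insert_le hEmpty hDown e (D ∪ K i)
    omega
  refine ⟨i, ?_, fun S hS => ?_⟩
  · refine indep_of_rank_eq_card hEmpty ?_
    rw [rank_insert_of_subset hEmpty hDown hExch subset_union_right hDi,
      rank_eq_card_of_indep (hK i), card_insert_of_notMem (heK i)]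
  have hrank :=
    sum_comp_update_add (K := K) (i := i) (fun X => rank Indep (S ∪ X)) (insert e (K i))
  have hcard := sum_comp_update_add (K := K) (i := i) card (insert e (K i))
  rw [union_insert] at hrank
  rw [card_insert_of_notMem (heK i)] at hcard
  have hSE := hE S (hS.trans (erase_subset e E))
  unfold unionRankSum at hSE ⊢
  by_cases hSt : IsTight Indep K S
  · have := rank_insert_of_subset hEmpty hDown hExch
      (union_subset_union_left (hDmax S hS hSt)) hDi
    omega
  · have := rank_mono Indep (subset_insert e (S ∪ K i))
    unfold IsTight unionRankSum at hSt
    omega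

include hEmpty hDown hExch in
theorem PartitionCondition.exists_partition {K : ι → Finset (Fin n)} {E : Finset (Fin n)}
    (hE : PartitionCondition Indep K E) (hK : ∀ i, Indep (K i))
    (hKd : Pairwise (Disjoint on K)) (hEK : ∀ i, Disjoint E (K i)) :
    ∃ P : ι → Finset (Fin n), (∀ i, Indep (P i)) ∧ Pairwise (Disjoint on P) ∧
      univ.biUnion P = E ∪ univ.biUnion K := by
  induction E using Finset.induction_on generalizing K with
  | empty => exact ⟨K, hK, hKd, (empty_union _).symm⟩
  | insert e E he ih =>
    have heK : ∀ i, e ∉ K i := fun i => disjoint_left.1 (hEK i) (mem_insert_self e E)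
    obtain ⟨i, hi, hE'⟩ :=
      hE.exists_indep_insert hEmpty hDown hExch hK (mem_insert_self e E) heK
    rw [erase_insert he] at hE'
    obtain ⟨P, hP, hPd, hPU⟩ := ih hE'
      ((forall_update_iff K fun _ => Indep).2 ⟨hi, fun j _ => hK j⟩)
      (pairwise_disjoint_update_insert hKd heK)
      ((forall_update_iff K fun _ => Disjoint E).2
        ⟨disjoint_insert_right.2 ⟨he, (hEK i).mono_left (subset_insert e E)⟩,
          fun j _ => (hEK j).mono_left (subset_insert e E)⟩)
    exact ⟨P, hP, hPd, by rw [hPU, biUnion_update_insert, union_insert, insert_union]⟩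

end Partition

/-- Matroid partition theorem (Edmonds 1965): the ground set `[n]` can be partitioned
into `t` pairwise disjoint independent sets iff `|S| ≤ t·rank(S)` for every `S ⊆ [n]`. -/
theorem stmt_12 {n : ℕ} (Indep : Finset (Fin n) → Prop)
    (hEmpty : Indep ∅)
    (hDown : ∀ A B : Finset (Fin n), A ⊆ B → Indep B → Indep A)
    (hExch : ∀ A B : Finset (Fin n), Indep A → Indep B → A.card < B.card →
      ∃ x ∈ B, x ∉ A ∧ Indep (insert x A))
    (t : ℕ) :
    (∃ P : Fin t → Finset (Fin n),
        (∀ k, Indep (P k)) ∧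
        (∀ k l, k ≠ l → Disjoint (P k) (P l)) ∧
        Finset.univ.biUnion P = Finset.univ) ↔
    ∀ S : Finset (Fin n), S.card ≤ t * rank Indep S := by
  constructor
  · rintro ⟨P, hP, -, hPU⟩ S
    simpa using card_le_card_mul_rank hDown hP (hPU ▸ subset_univ S)
  · intro h
    have hcond : PartitionCondition Indep (fun _ : Fin t => ∅) univ := fun S _ => by
      simpa [unionRankSum] using h S
    obtain ⟨P, hP, hPd, hPU⟩ := hcond.exists_partition hEmpty hDown hExch (fun _ => hEmpty)
      (fun _ _ _ => disjoint_empty_left _) (fun _ => disjoint_empty_right _)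
    exact ⟨P, hP, fun k l hkl => hPd hkl, by rw [hPU]; ext; simp⟩
end
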